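/- Adopt the standing setup: Λ a connected row-finite k-graph with no sources, c : Λ → G a cocycle, H_n a descending chain of finite-index normal subgroups with H_1 = G, G_n = G/H_n, c_n(λ) = c(λ)H_n, Λ_n = Λ ×_{c_n} G_n and coverings p_n(λ, g) = (λ, q_n(g)). Let Ĝ := varprojlim(G_n, q_n) and let Q_n : Ĝ → G_n denote the canonical projections. Then c̃(λ) := (c_n(λ))_{n≥1} defines a cocycle c̃ : Λ → Ĝ, and the map Φ : Λ × Ĝ → varprojlim(Λ_i, p_i), Φ(λ, g) := ((λ, Q_n(g)))_{n≥1}, is a bijection which intertwines the skew-product structure with the coordinatewise structure: Φ preserves degree, Φ carries the range (λ, g) ↦ (r(λ), c̃(λ)g), the source (λ, g) ↦ (s(λ), g), and the composition (μ, c̃(ν)g)(ν, g) = (μν, g) to the coordinatewise range r̃, source s̃ and composition of varprojlim(Λ_i, p_i). -/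

import Mathlib

open CategoryTheory

attribute [local instance 2000] Preorder.smallCategory

/-- A `k`-graph: a small category `Λ` equipped with a degree functor `d : Λ → ℕᵏ`
satisfying the unique factorisation property.  Morphisms point from the range of a path
to its source, so that `f ≫ g` corresponds to the composition `fg` of paths in the
`k`-graph literature (with `r (f ≫ g) = r f` and `s (f ≫ g) = s g`). -/
structure KGraph (k : ℕ) (Λ : Type) [SmallCategory Λ] : Type where
  deg : ∀ {a b : Λ}, (a ⟶ b) → Fin k → ℕ
  deg_id : ∀ a : Λ, deg (𝟙 a) = 0
  deg_comp : ∀ {a b c : Λ} (f : a ⟶ b) (g : b ⟶ c), deg (f ≫ g) = deg f + deg g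
  factor : ∀ {a b : Λ} (f : a ⟶ b) (m n : Fin k → ℕ), deg f = m + n →
    ∃! t : Σ c : Λ, (a ⟶ c) × (c ⟶ b),
      deg t.2.1 = m ∧ deg t.2.2 = n ∧ t.2.1 ≫ t.2.2 = f

/-- An infinite path in a `k`-graph: a degree-preserving functor `Ω_k → Λ`, where `Ω_k`
is realised as the preorder category on `ℕᵏ = Fin k → ℕ`; the morphism `(p, q)` (for
`p ≤ q`) is `homOfLE h : p ⟶ q` and must be sent to a path of degree `q - p`.
The range of the path is `P.obj 0`. -/
structure InfPath {k : ℕ} {Λ : Type} [SmallCategory Λ] (KG : KGraph k Λ) : Type where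
  P : (Fin k → ℕ) ⥤ Λ
  deg_eq : ∀ {p q : Fin k → ℕ} (h : p ≤ q), KG.deg (P.map (homOfLE h)) = q - p

/-- Translation by `n` on `ℕᵏ`, as a functor. -/
def transFunctor (k : ℕ) (n : Fin k → ℕ) : (Fin k → ℕ) ⥤ (Fin k → ℕ) where
  obj p := p + n
  map f := homOfLE (add_le_add (leOfHom f) (le_refl n))
  map_id _ := rfl
  map_comp _ _ := rfl

/-- The shift `σⁿ x` of an infinite path `x`, satisfying `σⁿ x (p, q) = x (p + n, q + n)`. -/
def InfPath.shift {k : ℕ} {Λ : Type} [SmallCategory Λ] {KG : KGraph k Λ}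
    (x : InfPath KG) (n : Fin k → ℕ) : InfPath KG where
  P := transFunctor k n ⋙ x.P
  deg_eq {p q} h := by
    have h1 : (transFunctor k n ⋙ x.P).map (homOfLE h)
        = x.P.map (homOfLE (add_le_add h (le_refl n))) := rfl
    refine (x.deg_eq (add_le_add h (le_refl n))).trans ?_
    funext i
    simp only [Pi.sub_apply, Pi.add_apply]
    omega

/-- A cocycle on a `k`-graph: a functor `c : Λ → G` into a group `G` (viewed as a category
with one object).  With our orientation of arrows, `c (f ≫ g) = c f * c g`. -/
structure Cocycle (Λ : Type) [SmallCategory Λ] (G : Type) [Group G] : Type where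
  c : ∀ {a b : Λ}, (a ⟶ b) → G
  map_id : ∀ a : Λ, c (𝟙 a) = 1
  map_comp : ∀ {a b d : Λ} (f : a ⟶ b) (g : b ⟶ d), c (f ≫ g) = c f * c g

/-- The skew product `Λ ×_c G`: vertices are pairs `(v, g)`, and `(λ, g)` is a path with
source `(s λ, g)` and range `(r λ, c(λ) g)`.  Here a morphism from `(a, h)` to `(b, g)` is
a path `f : a ⟶ b` with `c f * g = h`. -/
structure Skew {Λ : Type} [SmallCategory Λ] {G : Type} [Group G] (σ : Cocycle Λ G) : Type where
  base : Λ
  grp : G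

instance Skew.instCategory {Λ : Type} [SmallCategory Λ] {G : Type} [Group G]
    (σ : Cocycle Λ G) : SmallCategory (Skew σ) where
  Hom a b := {f : a.base ⟶ b.base // σ.c f * b.grp = a.grp}
  id a := ⟨𝟙 a.base, by rw [σ.map_id, one_mul]⟩
  comp f g := ⟨f.1 ≫ g.1, by rw [σ.map_comp, mul_assoc, g.2, f.2]⟩
  id_comp f := by apply Subtype.ext; exact Category.id_comp f.1
  comp_id f := by apply Subtype.ext; exact Category.comp_id f.1
  assoc f g h := by apply Subtype.ext; exact Category.assoc f.1 g.1 h.1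

/-- The `k`-graph structure on the skew product `Λ ×_c G`. -/
def skewKGraph {k : ℕ} {Λ : Type} [SmallCategory Λ] (KG : KGraph k Λ) {G : Type} [Group G]
    (σ : Cocycle Λ G) : KGraph k (Skew σ) where
  deg f := KG.deg f.1
  deg_id a := KG.deg_id a.base
  deg_comp f g := KG.deg_comp f.1 g.1
  factor := by
    rintro a b f m n hmn
    obtain ⟨⟨c0, g0, h0⟩, ⟨hgm, hhn, hgh⟩, huniq⟩ := KG.factor f.1 m n hmn
    refine ⟨⟨⟨c0, (σ.c g0)⁻¹ * a.grp⟩, ⟨g0, mul_inv_cancel_left _ _⟩, ⟨h0, ?_⟩⟩,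
      ⟨hgm, hhn, Subtype.ext hgh⟩, ?_⟩
    · rw [← f.2, ← hgh, σ.map_comp, mul_assoc, inv_mul_cancel_left]
    · rintro ⟨⟨c1, x1⟩, ⟨g1, hg1⟩, ⟨h1, hh1⟩⟩ ⟨hm1, hn1, hcomp1⟩
      have hbase : (⟨c0, g0, h0⟩ : Σ c : Λ, (a.base ⟶ c) × (c ⟶ b.base)) = ⟨c1, g1, h1⟩ :=
        (huniq ⟨c1, g1, h1⟩ ⟨hm1, hn1, congrArg Subtype.val hcomp1⟩).symm
      obtain ⟨h1', h2'⟩ := Sigma.mk.inj_iff.mp hbase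
      subst h1'
      obtain ⟨h3', h4'⟩ := Prod.mk.inj (eq_of_heq h2')
      subst h3'
      subst h4'
      have hx : x1 = (σ.c g0)⁻¹ * a.grp := by rw [← hg1, inv_mul_cancel_left]
      subst hx
      rfl

/-- For `m ≤ n` and a descending chain `H` of normal subgroups, the canonical map
`G/Hₙ → G/Hₘ` (the map `q_{m,n}` induced by the projections `qᵢ`). -/
def quotDown {G : Type} [Group G] {H : ℕ → Subgroup G} [∀ i, (H i).Normal]
    (hH : Antitone H) {m n : ℕ} (h : m ≤ n) : G ⧸ H n →* G ⧸ H m :=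
  QuotientGroup.map _ _ (MonoidHom.id G) (fun _ hx => hH h hx)

lemma quotDown_mk {G : Type} [Group G] {H : ℕ → Subgroup G} [∀ i, (H i).Normal]
    (hH : Antitone H) {m n : ℕ} (h : m ≤ n) (g : G) :
    quotDown hH h (g : G ⧸ H n) = (g : G ⧸ H m) := rfl

lemma quotDown_refl {G : Type} [Group G] {H : ℕ → Subgroup G} [∀ i, (H i).Normal]
    (hH : Antitone H) (n : ℕ) (z : G ⧸ H n) : quotDown hH (le_refl n) z = z := by
  induction z using QuotientGroup.induction_on with
  | _ g => rfl

lemma quotDown_comp {G : Type} [Group G] {H : ℕ → Subgroup G} [∀ i, (H i).Normal]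
    (hH : Antitone H) {l m n : ℕ} (h1 : l ≤ m) (h2 : m ≤ n) (z : G ⧸ H n) :
    quotDown hH h1 (quotDown hH h2 z) = quotDown hH (h1.trans h2) z := by
  induction z using QuotientGroup.induction_on with
  | _ g => rfl

/-- Total version of `quotDown` (junk value `1` when `m > n`). -/
def qd {G : Type} [Group G] {H : ℕ → Subgroup G} [∀ i, (H i).Normal]
    (hH : Antitone H) (m n : ℕ) (z : G ⧸ H n) : G ⧸ H m :=
  if h : m ≤ n then quotDown hH h z else 1

/-- The induced cocycle `c_N : Λ → G/N`, `c_N(λ) = c(λ)N`. -/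
def cq {Λ : Type} [SmallCategory Λ] {G : Type} [Group G] (c : Cocycle Λ G)
    (N : Subgroup G) [N.Normal] : Cocycle Λ (G ⧸ N) where
  c f := ↑(c.c f)
  map_id a := by
    show ((c.c (𝟙 a) : G) : G ⧸ N) = 1
    rw [c.map_id]; rfl
  map_comp f g := by
    show ((c.c (f ≫ g) : G) : G ⧸ N) = ↑(c.c f) * ↑(c.c g)
    rw [c.map_comp]; rfl

/-- An object of the projective limit `varprojlim (Λᵢ, pᵢ)`: a compatible sequence of
vertices. -/
structure PLimObj (Λ : ℕ → Type) [∀ n, SmallCategory (Λ n)]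
    (p : ∀ n, Λ (n + 1) ⥤ Λ n) : Type where
  v : ∀ n, Λ n
  compat : ∀ n, (p n).obj (v (n + 1)) = v n

/-- A morphism of the projective limit `varprojlim (Λᵢ, pᵢ)`: a compatible sequence of
paths `λᵢ ∈ Λᵢ` with `pᵢ(λ_{i+1}) = λᵢ`. -/
@[ext]
structure PLimHom {Λ : ℕ → Type} [∀ n, SmallCategory (Λ n)]
    {p : ∀ n, Λ (n + 1) ⥤ Λ n} (a b : PLimObj Λ p) : Type where
  f : ∀ n, a.v n ⟶ b.v n
  compat : ∀ n, f n =
    eqToHom (a.compat n).symm ≫ (p n).map (f (n + 1)) ≫ eqToHom (b.compat n)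

/-- The projective limit `varprojlim (Λᵢ, pᵢ)` is a small category with coordinatewise
composition, identities, range and source. -/
instance PLimObj.instCategory (Λ : ℕ → Type) [∀ n, SmallCategory (Λ n)]
    (p : ∀ n, Λ (n + 1) ⥤ Λ n) : SmallCategory (PLimObj Λ p) where
  Hom a b := PLimHom a b
  id a := ⟨fun n => 𝟙 (a.v n), by intro n; simp⟩
  comp f g := ⟨fun n => f.f n ≫ g.f n, by
    intro n
    try dsimp only
    rw [f.compat n, g.compat n]
    simp⟩
  id_comp f := by apply PLimHom.ext; funext n; exact Category.id_comp (f.f n)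
  comp_id f := by apply PLimHom.ext; funext n; exact Category.comp_id (f.f n)
  assoc f g h := by apply PLimHom.ext; funext n; exact Category.assoc (f.f n) (g.f n) (h.f n)

/-- The degree map on `varprojlim (Λᵢ, pᵢ)`: the degree of the first component. -/
def dtilde {k : ℕ} {Λ : ℕ → Type} [∀ n, SmallCategory (Λ n)]
    {p : ∀ n, Λ (n + 1) ⥤ Λ n} (KGs : ∀ n, KGraph k (Λ n))
    {a b : PLimObj Λ p} (f : a ⟶ b) : Fin k → ℕ :=
  (KGs 0).deg (f.f 0)

/-- The projective limit group `Ĝ = varprojlim (G/Hₙ, qₙ)`, as a subgroup of `∏ₙ G/Hₙ`. -/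
def ghatSubgroup {G : Type} [Group G] {H : ℕ → Subgroup G} [∀ i, (H i).Normal]
    (hH : Antitone H) : Subgroup (∀ n, G ⧸ H n) where
  carrier := {g | ∀ n, quotDown hH (Nat.le_succ n) (g (n + 1)) = g n}
  one_mem' := by intro n; simp only [Pi.one_apply, map_one]
  mul_mem' := by
    intro a b ha hb n
    simp only [Pi.mul_apply, map_mul]
    rw [ha n, hb n]
  inv_mem' := by
    intro a ha n
    simp only [Pi.inv_apply, map_inv]
    rw [ha n]

/-- The cocycle `c̃ : Λ → Ĝ`, `c̃(λ) = (cₙ(λ))ₙ`, induced by `c` and the projections. -/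
def ctilde {Λ : Type} [SmallCategory Λ] {G : Type} [Group G] (c : Cocycle Λ G)
    {H : ℕ → Subgroup G} [∀ i, (H i).Normal] (hH : Antitone H) :
    Cocycle Λ ↥(ghatSubgroup hH) where
  c f := ⟨fun n => ↑(c.c f), fun _ => rfl⟩
  map_id a := by
    apply Subtype.ext
    funext n
    show ((c.c (𝟙 a) : G) : G ⧸ H n) = 1
    rw [c.map_id]
    rfl
  map_comp f g := by
    apply Subtype.ext
    funext n
    show ((c.c (f ≫ g) : G) : G ⧸ H n) = ↑(c.c f) * ↑(c.c g)
    rw [c.map_comp]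
    rfl

/-- The covering `pₙ : Λ ×_{c_{n+1}} G/H_{n+1} → Λ ×_{cₙ} G/Hₙ`,
`pₙ(λ, g) = (λ, qₙ(g))`, as a functor of skew products. -/
def skewProj {Λ : Type} [SmallCategory Λ] {G : Type} [Group G] (c : Cocycle Λ G)
    {H : ℕ → Subgroup G} [∀ i, (H i).Normal] (hH : Antitone H) (n : ℕ) :
    Skew (cq c (H (n + 1))) ⥤ Skew (cq c (H n)) where
  obj a := ⟨a.base, quotDown hH (Nat.le_succ n) a.grp⟩
  map {a b} f := ⟨f.1, by
    have h := congrArg (quotDown hH (Nat.le_succ n)) f.2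
    rw [map_mul] at h
    exact h⟩
  map_id a := by apply Subtype.ext; rfl
  map_comp f g := by apply Subtype.ext; rfl

/-!
Since the coverings `pₙ` leave the path coordinate of `(λ, g)` unchanged and act on the
group coordinate by `qₙ`, a compatible sequence `((λₙ, gₙ))ₙ` has constant path
coordinate `λₙ = λ₀`, and its group coordinates form, by definition, an element of `Ĝ`.
So `((λₙ, gₙ))ₙ ↦ (λ₀, (gₙ)ₙ)` inverts `Φ`, on vertices and on paths alike; degree, range,
source and composition are preserved because `c̃` and every operation of the limit are
computed coordinatewise.
-/

lemma Skew.eqToHom_val {Λ : Type} [SmallCategory Λ] {G : Type} [Group G] {σ : Cocycle Λ G}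
    {x y : Skew σ} (h : x = y) : (eqToHom h).1 = eqToHom (congrArg Skew.base h) := by
  subst h; rfl

lemma Skew.comp_val {Λ : Type} [SmallCategory Λ] {G : Type} [Group G] {σ : Cocycle Λ G}
    {x y z : Skew σ} (f : x ⟶ y) (g : y ⟶ z) : (f ≫ g).1 = f.1 ≫ g.1 := rfl

lemma skewProj_map_val {Λ : Type} [SmallCategory Λ] {G : Type} [Group G] (c : Cocycle Λ G)
    {H : ℕ → Subgroup G} [∀ i, (H i).Normal] (hH : Antitone H) (n : ℕ)
    {x y : Skew (cq c (H (n + 1)))} (f : x ⟶ y) : ((skewProj c hH n).map f).1 = f.1 := rfl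

lemma PLimObj.ext {Λ : ℕ → Type} [∀ n, SmallCategory (Λ n)] {p : ∀ n, Λ (n + 1) ⥤ Λ n}
    {x y : PLimObj Λ p} (h : x.v = y.v) : x = y := by
  cases x; cases y; cases h; rfl

section CoverLimit

variable {Λ : Type} [SmallCategory Λ] {G : Type} [Group G] (c : Cocycle Λ G)
  {H : ℕ → Subgroup G} [∀ i, (H i).Normal] (hH : Antitone H)

/-- The projective limit `varprojlim (Λ ×_{cₙ} G/Hₙ, pₙ)` of the tower of coverings. -/
abbrev CoverLimit : Type :=
  PLimObj (fun i => Skew (cq c (H i))) (fun i => skewProj c hH i)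

lemma CoverLimit.base_eq (x : CoverLimit c hH) (n : ℕ) : (x.v n).base = (x.v 0).base := by
  induction n with
  | zero => rfl
  | succ m ih => exact (congrArg Skew.base (x.compat m)).trans ih

/-- The map `Φ(λ, g) = ((λ, Qₙ(g)))ₙ`, as a functor. -/
def toCoverLimit : Skew (ctilde c hH) ⥤ CoverLimit c hH where
  obj a := ⟨fun n => ⟨a.base, a.grp.1 n⟩, fun n => congrArg (Skew.mk a.base) (a.grp.2 n)⟩
  map {a b} f := ⟨fun n => ⟨f.1, congrArg (fun z : ghatSubgroup hH => z.1 n) f.2⟩, fun _ => by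
    apply Subtype.ext
    simp only [Skew.comp_val, skewProj_map_val, Skew.eqToHom_val]
    exact (show f.1 = 𝟙 _ ≫ f.1 ≫ 𝟙 _ by simp)⟩
  map_id _ := rfl
  map_comp _ _ := rfl

def ofCoverLimit (x : CoverLimit c hH) : Skew (ctilde c hH) :=
  ⟨(x.v 0).base, ⟨fun n => (x.v n).grp, fun n => congrArg Skew.grp (x.compat n)⟩⟩

theorem toCoverLimit_obj_bijective : Function.Bijective (toCoverLimit c hH).obj := by
  refine Function.bijective_iff_has_inverse.mpr ⟨ofCoverLimit c hH, fun _ => rfl, fun x => ?_⟩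
  refine PLimObj.ext (funext fun n => ?_)
  change Skew.mk (x.v 0).base (x.v n).grp = x.v n
  rw [← CoverLimit.base_eq c hH x n]

variable {c hH}

lemma toCoverLimit_hom_val_eq {a b : Skew (ctilde c hH)}
    (φ : (toCoverLimit c hH).obj a ⟶ (toCoverLimit c hH).obj b) (n : ℕ) :
    ((φ.f n).1 : a.base ⟶ b.base) = (φ.f 0).1 := by
  induction n with
  | zero => rfl
  | succ m ih =>
    have hcompat := congrArg Subtype.val (φ.compat m)
    simp only [Skew.comp_val, skewProj_map_val, Skew.eqToHom_val] at hcompat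
    -- both `eqToHom`s now join a vertex of `Λ` to itself, so they are identities by `rfl`
    have hsucc : ((φ.f m).1 : a.base ⟶ b.base) = 𝟙 _ ≫ (φ.f (m + 1)).1 ≫ 𝟙 _ := hcompat
    rw [Category.id_comp, Category.comp_id] at hsucc
    exact hsucc.symm.trans ih

def ofCoverLimitHom {a b : Skew (ctilde c hH)}
    (φ : (toCoverLimit c hH).obj a ⟶ (toCoverLimit c hH).obj b) : a ⟶ b :=
  ⟨(φ.f 0).1, Subtype.ext (funext fun n => by
    rw [← toCoverLimit_hom_val_eq φ n]
    exact (φ.f n).2)⟩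

theorem toCoverLimit_map_bijective (a b : Skew (ctilde c hH)) :
    Function.Bijective fun f : a ⟶ b => (toCoverLimit c hH).map f :=
  Function.bijective_iff_has_inverse.mpr ⟨ofCoverLimitHom, fun _ => rfl, fun φ =>
    PLimHom.ext (funext fun n => Subtype.ext (toCoverLimit_hom_val_eq φ n).symm)⟩

end CoverLimit

theorem stmt19_general {k : ℕ} {Λ : Type} [SmallCategory Λ] (KG : KGraph k Λ)
    {G : Type} [Group G] (c : Cocycle Λ G)
    (H : ℕ → Subgroup G) [∀ i, (H i).Normal] (hH : Antitone H) :
    ∃ F : Skew (ctilde c hH) ⥤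
        PLimObj (fun i => Skew (cq c (H i))) (fun i => skewProj c hH i),
      (∀ (a : Skew (ctilde c hH)) (n : ℕ), (F.obj a).v n = ⟨a.base, a.grp.1 n⟩) ∧
      (∀ (a b : Skew (ctilde c hH)) (f : a ⟶ b) (n : ℕ), HEq ((F.map f).f n).1 f.1) ∧
      Function.Bijective F.obj ∧
      (∀ a b : Skew (ctilde c hH), Function.Bijective fun f : a ⟶ b => F.map f) ∧
      (∀ (a b : Skew (ctilde c hH)) (f : a ⟶ b),
        (skewKGraph KG (cq c (H 0))).deg ((F.map f).f 0) =
          (skewKGraph KG (ctilde c hH)).deg f) :=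
  ⟨toCoverLimit c hH, fun _ _ => rfl, fun _ _ _ _ => HEq.rfl, toCoverLimit_obj_bijective c hH,
    toCoverLimit_map_bijective, fun _ _ _ => rfl⟩

/-- Standing setup: `Λ` a connected row-finite `k`-graph with no sources,
`c : Λ → G` a cocycle, `(Hₙ)` a descending chain of finite-index normal subgroups with
`H₀ = G`.  Let `Ĝ = varprojlim (G/Hₙ, qₙ)`.  Then `c̃(λ) = (cₙ(λ))ₙ` defines a cocycle
`c̃ : Λ → Ĝ` (the construction `ctilde` above), and the map
`Φ(λ, g) = ((λ, Qₙ(g)))ₙ` is a bijection from `Λ ×_{c̃} Ĝ` onto `varprojlim (Λᵢ, pᵢ)`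
intertwining the skew-product structure (degree, range, source and composition) with the
coordinatewise structure of the projective limit: formally, there is a functor `F` from the
skew product `Λ ×_{c̃} Ĝ` to `varprojlim (Λ ×_{cₙ} G/Hₙ, pₙ)` acting by
`(λ, g) ↦ ((λ, Qₙ(g)))ₙ` on objects and morphisms, bijective on objects and on morphisms,
and preserving the degree. -/
theorem stmt19 {k : ℕ} {Λ : Type} [SmallCategory Λ] (KG : KGraph k Λ)
    [IsConnected Λ]
    (hrow : ∀ (v : Λ) (d : Fin k → ℕ), Finite ((b : Λ) × {f : v ⟶ b // KG.deg f = d}))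
    (hns : ∀ (v : Λ) (d : Fin k → ℕ), ∃ (b : Λ) (f : v ⟶ b), KG.deg f = d)
    {G : Type} [Group G] (c : Cocycle Λ G)
    (H : ℕ → Subgroup G) [∀ i, (H i).Normal] (hH : Antitone H)
    (hfin : ∀ i, (H i).FiniteIndex) (hH0 : H 0 = ⊤) :
    ∃ F : Skew (ctilde c hH) ⥤
        PLimObj (fun i => Skew (cq c (H i))) (fun i => skewProj c hH i),
      (∀ (a : Skew (ctilde c hH)) (n : ℕ), (F.obj a).v n = ⟨a.base, a.grp.1 n⟩) ∧
      (∀ (a b : Skew (ctilde c hH)) (f : a ⟶ b) (n : ℕ), HEq ((F.map f).f n).1 f.1) ∧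
      Function.Bijective F.obj ∧
      (∀ a b : Skew (ctilde c hH), Function.Bijective fun f : a ⟶ b => F.map f) ∧
      (∀ (a b : Skew (ctilde c hH)) (f : a ⟶ b),
        (skewKGraph KG (cq c (H 0))).deg ((F.map f).f 0) =
          (skewKGraph KG (ctilde c hH)).deg f) :=
  stmt19_general KG c H hH
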